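/- A Banach lattice E has the positive Schur property if and only if every pairwise disjoint absolutely weakly null sequence in E is norm null. -/

import Mathlib

set_option linter.unusedSectionVars false

open Filter Topology Pointwise MeasureTheory


section Defs

variable {E : Type*} [NormedAddCommGroup E] [Lattice E] [HasSolidNorm E] [IsOrderedAddMonoid E] [NormedSpace ℝ E]

/-- The pseudometric on a Banach lattice induced by a positive continuous linear functional `f`,
given by `dist x y = f |x - y|`. -/
noncomputable def absSeminormDist (f : E →L[ℝ] ℝ) (hf : ∀ x : E, 0 ≤ x → 0 ≤ f x) :
    PseudoMetricSpace E where
  dist x y := f |x - y|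
  dist_self x := by simp
  dist_comm x y := by simp [abs_sub_comm]
  dist_triangle x y z := by
    have h1 : |x - z| ≤ |x - y| + |y - z| := by
      calc |x - z| = |(x - y) + (y - z)| := by abel_nf
      _ ≤ |x - y| + |y - z| := abs_add_le _ _
    have h2 := hf (|x - y| + |y - z| - |x - z|) (sub_nonneg.mpr h1)
    simp only [map_sub, map_add] at h2
    linarith

/-- The absolute weak topology `|σ|(E, E*)` on a Banach lattice `E`: the topology generated by
the lattice seminorms `x ↦ |x*|(|x|) = x*(|x|)`, for `x*` ranging over the positive continuous
linear functionals on `E`. -/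
noncomputable def absWeakTopology (E : Type*) [NormedAddCommGroup E] [Lattice E] [HasSolidNorm E] [IsOrderedAddMonoid E] [NormedSpace ℝ E] :
    TopologicalSpace E :=
  ⨅ f : {f : E →L[ℝ] ℝ // ∀ x : E, 0 ≤ x → 0 ≤ f x},
    (absSeminormDist f.1 f.2).toUniformSpace.toTopologicalSpace

end Defs


/-!
Both sides of the equivalence are about sequences `x` with `f (x n) → 0` for every positive
functional `f`: every functional is dominated on the positive cone by a positive one
(Riesz–Kantorovich), so for positive sequences this is weak nullity. The forward direction
follows by applying the positive Schur property to `|x n|`.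

Conversely, let `x ≥ 0` be weakly null with `‖x n‖ ≥ δ`. If `‖x s ⊓ x t‖ → 0` as `t → ∞` for
every `s`, a subsequence is a small perturbation of a disjoint sequence, which is absurd. Otherwise
some `x s ⊓ x t` stay away from `0` along a subsequence, inside the order interval `[0, x s]`.
Running the same dichotomy by induction on the overlap of the cut-down increments of a monotone
sequence shows that the norm is σ-order continuous, and then the tail suprema of a sequence in an
order interval exist; testing them against norming functionals shows that positive weakly null
sequences in an order interval are norm null.
-/

open Set

section LatticeOrderedGroup

variable {E : Type*} [Lattice E] [AddCommGroup E] [IsOrderedAddMonoid E]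

/-- The Riesz decomposition property. -/
theorem Icc_zero_add {x y : E} (hx : 0 ≤ x) (hy : 0 ≤ y) :
    Icc 0 (x + y) = Icc 0 x + Icc 0 y := by
  ext z
  constructor
  · rintro ⟨hz0, hz⟩
    refine ⟨z ⊓ x, ⟨le_inf hz0 hx, inf_le_right⟩, (z - x)⁺,
      ⟨posPart_nonneg _, sup_le (sub_le_iff_le_add'.2 hz) hy⟩, ?_⟩
    rw [inf_eq_sub_posPart_sub]
    exact sub_add_cancel _ _
  · rintro ⟨a, ⟨ha0, hax⟩, b, ⟨hb0, hby⟩, rfl⟩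
    exact ⟨add_nonneg ha0 hb0, add_le_add hax hby⟩

theorem inf_add_le_inf_add_inf {x a b : E} (hx : 0 ≤ x) (ha : 0 ≤ a) (hb : 0 ≤ b) :
    x ⊓ (a + b) ≤ x ⊓ a + x ⊓ b := by
  obtain ⟨d₁, ⟨hd₁, hd₁a⟩, d₂, ⟨hd₂, hd₂b⟩, hd⟩ : x ⊓ (a + b) ∈ Icc 0 a + Icc 0 b :=
    Icc_zero_add ha hb ▸ ⟨le_inf hx (add_nonneg ha hb), inf_le_right⟩
  replace hd : d₁ + d₂ = x ⊓ (a + b) := hd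
  have hdx : d₁ + d₂ ≤ x := hd ▸ inf_le_left
  rw [← hd]
  exact add_le_add (le_inf ((le_add_of_nonneg_right hd₂).trans hdx) hd₁a)
    (le_inf ((le_add_of_nonneg_left hd₁).trans hdx) hd₂b)

theorem inf_sum_eq_zero {ι : Type*} {x : E} {a : ι → E} {s : Finset ι} (hx : 0 ≤ x)
    (ha : ∀ k ∈ s, 0 ≤ a k) (h : ∀ k ∈ s, x ⊓ a k = 0) : x ⊓ ∑ k ∈ s, a k = 0 := by
  classical
  induction s using Finset.induction_on with
  | empty => simpa using hx
  | insert k s hk ih =>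
    simp only [Finset.forall_mem_insert] at ha h
    rw [Finset.sum_insert hk]
    refine le_antisymm ?_ (le_inf hx (add_nonneg ha.1 (Finset.sum_nonneg ha.2)))
    calc x ⊓ (a k + ∑ i ∈ s, a i) ≤ x ⊓ a k + x ⊓ ∑ i ∈ s, a i :=
          inf_add_le_inf_add_inf hx ha.1 (Finset.sum_nonneg ha.2)
      _ = 0 := by rw [h.1, ih ha.2 h.2, add_zero]

theorem posPart_sub_le {b c : E} (hb : 0 ≤ b) (hc : 0 ≤ c) : (b - c)⁺ ≤ b :=
  sup_le (sub_le_self _ hc) hb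

theorem partialSups_le_sum {G : ℕ → E} (hG : ∀ k, 0 ≤ G k) (N : ℕ) :
    partialSups G N ≤ ∑ k ∈ Finset.range (N + 1), G k :=
  partialSups_le _ _ _ fun _ hk =>
    Finset.single_le_sum (fun i _ => hG i) (Finset.mem_range.2 (Nat.lt_succ_of_le hk))

theorem posPart_sub_inf_posPart_sub_eq_zero {a b c d : E} (hc : a ⊓ b ≤ c) (hd : a ⊓ b ≤ d) :
    (a - c)⁺ ⊓ (b - d)⁺ = 0 := by
  have ha : a - c ≤ (a - b)⁺ :=
    (sub_le_sub_left hc a).trans_eq (by rw [inf_eq_sub_posPart_sub, sub_sub_cancel])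
  have hb : b - d ≤ (a - b)⁻ :=
    (sub_le_sub_left (inf_comm a b ▸ hd) b).trans_eq
      (by rw [inf_eq_sub_posPart_sub, sub_sub_cancel, ← posPart_neg, neg_sub])
  refine le_antisymm ?_ (le_inf (posPart_nonneg _) (posPart_nonneg _))
  exact (inf_le_inf (sup_le ha (posPart_nonneg _)) (sup_le hb (negPart_nonneg _))).trans_eq
    (posPart_inf_negPart_eq_zero _)

end LatticeOrderedGroup

section NormedLattice

variable {E : Type*} [NormedAddCommGroup E] [Lattice E] [HasSolidNorm E] [IsOrderedAddMonoid E]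

theorem norm_le_norm_of_nonneg_of_le {a b : E} (ha : 0 ≤ a) (hab : a ≤ b) : ‖a‖ ≤ ‖b‖ :=
  norm_le_norm_of_abs_le_abs (by rwa [abs_of_nonneg ha, abs_of_nonneg (ha.trans hab)])

theorem norm_posPart_le (x : E) : ‖x⁺‖ ≤ ‖x‖ :=
  (norm_le_norm_of_nonneg_of_le (posPart_nonneg x) (sup_le (le_abs_self x) (abs_nonneg x))).trans_eq
    (norm_abs_eq_norm x)

theorem norm_negPart_le (x : E) : ‖x⁻‖ ≤ ‖x‖ :=
  (norm_le_norm_of_nonneg_of_le (negPart_nonneg x) (sup_le (neg_le_abs x) (abs_nonneg x))).trans_eq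
    (norm_abs_eq_norm x)

theorem norm_sub_posPart_sub_le {b c : E} (hb : 0 ≤ b) (hc : 0 ≤ c) : ‖b - (b - c)⁺‖ ≤ ‖c‖ := by
  rw [← inf_eq_sub_posPart_sub]
  exact norm_le_norm_of_nonneg_of_le (le_inf hb hc) inf_le_right

/-- Take `d j = (y j - ∑' i ≠ j, y i ⊓ y j)⁺`. -/
theorem exists_disjoint_near [CompleteSpace E] {y : ℕ → E} (hy : ∀ n, 0 ≤ y n) {ε : ℝ}
    (h : ∀ i j, i < j → ‖y i ⊓ y j‖ ≤ ε * (1 / 2) ^ j) :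
    ∃ d : ℕ → E, (∀ n, 0 ≤ d n ∧ d n ≤ y n) ∧ Pairwise (fun i j => d i ⊓ d j = 0) ∧
      ∀ n, ‖y n - d n‖ ≤ 2 * ε := by
  have hε : 0 ≤ ε :=
    nonneg_of_mul_nonneg_left ((norm_nonneg _).trans (h 0 1 zero_lt_one)) (by norm_num)
  let c : ℕ → ℕ → E := fun i j => if i = j then 0 else y i ⊓ y j
  have hc0 : ∀ i j, 0 ≤ c i j := fun i j => by
    unfold c
    split_ifs
    exacts [le_rfl, le_inf (hy i) (hy j)]
  have hc : ∀ i j, ‖c i j‖ ≤ ε * (1 / 2) ^ i := by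
    intro i j
    rcases lt_trichotomy i j with hij | rfl | hij
    · simp only [c, if_neg hij.ne]
      exact (h i j hij).trans
        (mul_le_mul_of_nonneg_left (pow_le_pow_of_le_one (by norm_num) (by norm_num) hij.le) hε)
    · simp only [c, if_pos rfl, norm_zero]
      positivity
    · simp only [c, if_neg hij.ne']
      rw [inf_comm]
      exact h j i hij
  have hgeom : HasSum (fun i => ε * (1 / 2 : ℝ) ^ i) (ε * 2) := hasSum_geometric_two.mul_left ε
  let s : ℕ → E := fun j => ∑' i, c i j
  have hs0 : ∀ j, 0 ≤ s j := fun j => tsum_nonneg (hc0 · j)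
  have hys : ∀ i j, i ≠ j → y i ⊓ y j ≤ s j := fun i j hij => by
    simpa [c, hij] using (Summable.of_norm_bounded hgeom.summable (hc · j)).le_tsum i
      (fun k _ => hc0 k j)
  refine ⟨fun j => (y j - s j)⁺, fun j => ⟨posPart_nonneg _, posPart_sub_le (hy j) (hs0 j)⟩,
    fun i j hij => posPart_sub_inf_posPart_sub_eq_zero (inf_comm (y i) (y j) ▸ hys j i hij.symm)
      (hys i j hij), fun j => ?_⟩
  calc ‖y j - (y j - s j)⁺‖ ≤ ‖s j‖ := norm_sub_posPart_sub_le (hy j) (hs0 j)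
    _ ≤ ε * 2 := tsum_of_norm_bounded hgeom (hc · j)
    _ = 2 * ε := mul_comm _ _

end NormedLattice

section RieszKantorovich

variable {E : Type*} [NormedAddCommGroup E] [Lattice E] [HasSolidNorm E] [IsOrderedAddMonoid E]
  [NormedSpace ℝ E] (f : E →L[ℝ] ℝ)

/-- The Riesz–Kantorovich formula `f⁺(x) = sup f([0, x])`; only meaningful for `0 ≤ x`. -/
noncomputable def rieszKantorovich (x : E) : ℝ := sSup (f '' Icc 0 x)

theorem apply_le_opNorm_mul_of_mem_Icc {x y : E} (hy : y ∈ Icc 0 x) : f y ≤ ‖f‖ * ‖x‖ :=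
  calc f y ≤ ‖f‖ * ‖y‖ := (Real.le_norm_self _).trans (f.le_opNorm y)
    _ ≤ ‖f‖ * ‖x‖ := by gcongr; exact norm_le_norm_of_nonneg_of_le hy.1 hy.2

theorem bddAbove_image_Icc_zero (x : E) : BddAbove (f '' Icc 0 x) :=
  ⟨‖f‖ * ‖x‖, forall_mem_image.2 fun _ => apply_le_opNorm_mul_of_mem_Icc f⟩

theorem le_rieszKantorovich {x y : E} (hy : y ∈ Icc 0 x) : f y ≤ rieszKantorovich f x :=
  le_csSup (bddAbove_image_Icc_zero f x) (mem_image_of_mem f hy)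

theorem rieszKantorovich_nonneg {x : E} (hx : 0 ≤ x) : 0 ≤ rieszKantorovich f x := by
  simpa using le_rieszKantorovich f (left_mem_Icc.2 hx)

theorem rieszKantorovich_le {x : E} (hx : 0 ≤ x) : rieszKantorovich f x ≤ ‖f‖ * ‖x‖ :=
  csSup_le ((nonempty_Icc.2 hx).image f)
    (forall_mem_image.2 fun _ => apply_le_opNorm_mul_of_mem_Icc f)

theorem rieszKantorovich_zero : rieszKantorovich f 0 = 0 :=
  le_antisymm (by simpa using rieszKantorovich_le f le_rfl) (rieszKantorovich_nonneg f le_rfl)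

theorem rieszKantorovich_add {x y : E} (hx : 0 ≤ x) (hy : 0 ≤ y) :
    rieszKantorovich f (x + y) = rieszKantorovich f x + rieszKantorovich f y := by
  rw [rieszKantorovich, Icc_zero_add hx hy, image_add, csSup_add ((nonempty_Icc.2 hx).image f)
    (bddAbove_image_Icc_zero f x) ((nonempty_Icc.2 hy).image f) (bddAbove_image_Icc_zero f y)]
  rfl

theorem rieszKantorovich_posPart_sub_negPart {a b : E} (ha : 0 ≤ a) (hb : 0 ≤ b) :
    rieszKantorovich f (a - b)⁺ - rieszKantorovich f (a - b)⁻ =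
      rieszKantorovich f a - rieszKantorovich f b := by
  have h : (a - b)⁺ + b = a + (a - b)⁻ := sub_eq_sub_iff_add_eq_add.1 (posPart_sub_negPart _)
  have := congrArg (rieszKantorovich f) h
  rw [rieszKantorovich_add f (posPart_nonneg _) hb,
    rieszKantorovich_add f ha (negPart_nonneg _)] at this
  linarith

theorem exists_positive_functional_ge :
    ∃ F : E →L[ℝ] ℝ, (∀ x, 0 ≤ x → 0 ≤ F x) ∧ (∀ x, 0 ≤ x → f x ≤ F x) ∧ ‖F‖ ≤ ‖f‖ := by
  set p := rieszKantorovich f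
  let F : E →+ ℝ :=
    { toFun x := p x⁺ - p x⁻
      map_zero' := by simp [p, rieszKantorovich_zero]
      map_add' x y := by
        have hxy : x + y = (x⁺ + y⁺) - (x⁻ + y⁻) := by
          nth_rw 1 [← posPart_sub_negPart x, ← posPart_sub_negPart y]
          abel
        simp only [hxy, p, rieszKantorovich_posPart_sub_negPart f
          (add_nonneg (posPart_nonneg x) (posPart_nonneg y))
          (add_nonneg (negPart_nonneg x) (negPart_nonneg y)),
          rieszKantorovich_add f (posPart_nonneg _) (posPart_nonneg _),
          rieszKantorovich_add f (negPart_nonneg _) (negPart_nonneg _)]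
        ring }
  have hF : ∀ x, F x = p x⁺ - p x⁻ := fun _ => rfl
  have hFpos : ∀ x, 0 ≤ x → F x = p x := fun x hx => by
    simp [hF, posPart_of_nonneg hx, negPart_of_nonneg hx, p, rieszKantorovich_zero]
  have hbound : ∀ x, ‖F x‖ ≤ ‖f‖ * ‖x‖ := fun x => by
    rw [Real.norm_eq_abs, hF]
    exact abs_sub_le_of_nonneg_of_le (rieszKantorovich_nonneg f (posPart_nonneg x))
      ((rieszKantorovich_le f (posPart_nonneg x)).trans (by gcongr; exact norm_posPart_le x))
      (rieszKantorovich_nonneg f (negPart_nonneg x))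
      ((rieszKantorovich_le f (negPart_nonneg x)).trans (by gcongr; exact norm_negPart_le x))
  refine ⟨F.toRealLinearMap (AddMonoidHomClass.continuous_of_bound F _ hbound), fun x hx => ?_,
    fun x hx => ?_, ContinuousLinearMap.opNorm_le_bound _ (norm_nonneg f) hbound⟩
  · simpa [hFpos x hx] using rieszKantorovich_nonneg f hx
  · simpa [hFpos x hx] using le_rieszKantorovich f (right_mem_Icc.2 hx)

theorem exists_positive_norming_functional {a : E} (ha : 0 ≤ a) :
    ∃ F : E →L[ℝ] ℝ, (∀ x, 0 ≤ x → 0 ≤ F x) ∧ ‖a‖ ≤ F a ∧ ‖F‖ ≤ 1 := by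
  obtain ⟨g, hg1, hga⟩ := exists_dual_vector'' ℝ a
  obtain ⟨F, hF0, hgF, hF⟩ := exists_positive_functional_ge g
  exact ⟨F, hF0, by simpa [hga] using hgF a ha, hF.trans hg1⟩

end RieszKantorovich

theorem exists_strictMono_forall_lt_of_eventually {P : ℕ → ℕ → ℕ → Prop}
    (h : ∀ k a, ∀ᶠ b in atTop, P k a b) :
    ∃ φ : ℕ → ℕ, StrictMono φ ∧ ∀ i k, i < k → P k (φ i) (φ k) := by
  have hstep : ∀ k N, ∃ b, N < b ∧ ∀ a ∈ Iic N, P k a b := fun k N =>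
    ((eventually_gt_atTop N).and ((finite_Iic N).eventually_all.2 fun a _ => h k a)).exists
  choose g hgN hgP using hstep
  let φ : ℕ → ℕ := fun k => Nat.rec 0 (fun k φk => g (k + 1) φk) k
  have hφ : StrictMono φ := strictMono_nat_of_lt_succ fun k => hgN _ _
  refine ⟨φ, hφ, fun i k hik => ?_⟩
  cases k with
  | zero => omega
  | succ k => exact hgP (k + 1) (φ k) (φ i) (hφ.monotone (Nat.lt_succ_iff.1 hik))

theorem exists_frequently_le_of_not_tendsto_zero {α : Type*} {l : Filter α} {a : α → ℝ}
    (h0 : ∀ n, 0 ≤ a n) (h : ¬ Tendsto a l (𝓝 0)) : ∃ δ > 0, ∃ᶠ n in l, δ ≤ a n := by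
  by_contra! H
  exact h (tendsto_order.2 ⟨fun b hb => .of_forall fun n => hb.trans_le (h0 n), H⟩)

namespace ContinuousLinearMap

variable {E : Type*} [AddCommGroup E] [Module ℝ E] [TopologicalSpace E]

theorem monotone_of_nonneg [PartialOrder E] [IsOrderedAddMonoid E] (f : E →L[ℝ] ℝ)
    (hf : ∀ v, 0 ≤ v → 0 ≤ f v) : Monotone f := fun x y hxy => by
  simpa using hf _ (sub_nonneg.2 hxy)

theorem apply_le_of_tendsto_partialSups [Lattice E] [IsOrderedAddMonoid E] (f : E →L[ℝ] ℝ)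
    (hf : ∀ v, 0 ≤ v → 0 ≤ f v) {G : ℕ → E} (hG : ∀ k, 0 ≤ G k) {w : E}
    (hw : Tendsto (partialSups G) atTop (𝓝 w)) {c : ℝ}
    (hc : ∀ N, ∑ k ∈ Finset.range N, f (G k) ≤ c) : f w ≤ c :=
  le_of_tendsto' ((f.continuous.tendsto w).comp hw) fun N =>
    (f.monotone_of_nonneg hf (partialSups_le_sum hG N)).trans (by rw [map_sum]; exact hc _)

end ContinuousLinearMap

section PosWeaklyNull

variable {E : Type*} [NormedAddCommGroup E] [PartialOrder E] [NormedSpace ℝ E]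

/-- The common form of "positive weakly null" and, applied to `|x n|`, "absolutely weakly null". -/
def PosWeaklyNull (x : ℕ → E) : Prop :=
  ∀ f : E →L[ℝ] ℝ, (∀ v, 0 ≤ v → 0 ≤ f v) → Tendsto (fun n => f (x n)) atTop (𝓝 0)

theorem PosWeaklyNull.comp {x : ℕ → E} (hx : PosWeaklyNull x) {φ : ℕ → ℕ}
    (hφ : Tendsto φ atTop atTop) : PosWeaklyNull fun n => x (φ n) :=
  fun f hf => (hx f hf).comp hφ

variable [IsOrderedAddMonoid E]

theorem PosWeaklyNull.of_le {x y : ℕ → E} (hy : PosWeaklyNull y) (hx0 : ∀ n, 0 ≤ x n)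
    (hxy : ∀ n, x n ≤ y n) : PosWeaklyNull x := fun f hf =>
  squeeze_zero (fun n => hf _ (hx0 n)) (fun n => f.monotone_of_nonneg hf (hxy n)) (hy f hf)

theorem posWeaklyNull_of_sum_le {b : ℕ → E} {a : E} (hb : ∀ k, 0 ≤ b k)
    (hsum : ∀ N, ∑ k ∈ Finset.range N, b k ≤ a) : PosWeaklyNull b := fun f hf =>
  (summable_of_sum_range_le (fun k => hf _ (hb k)) fun N => by
    simpa only [map_sum] using f.monotone_of_nonneg hf (hsum N)).tendsto_atTop_zero

end PosWeaklyNull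

section AbsWeakTopology

variable {E : Type*} [NormedAddCommGroup E] [Lattice E] [HasSolidNorm E] [IsOrderedAddMonoid E]
  [NormedSpace ℝ E]

theorem PosWeaklyNull.tendsto_apply {x : ℕ → E} (hx : PosWeaklyNull x) (f : E →L[ℝ] ℝ) :
    Tendsto (fun n => f (x n)) atTop (𝓝 0) := by
  obtain ⟨F, hF0, hfF, -⟩ := exists_positive_functional_ge f
  have hFf : ∀ v, 0 ≤ v → 0 ≤ (F - f) v := fun v hv => sub_nonneg.2 (hfF v hv)
  simpa using (hx F hF0).sub (hx (F - f) hFf)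

theorem tendsto_absWeakTopology_zero_iff {x : ℕ → E} :
    Tendsto x atTop (@nhds E (absWeakTopology E) 0) ↔ PosWeaklyNull fun n => |x n| := by
  rw [absWeakTopology, nhds_iInf, tendsto_iInf, PosWeaklyNull, Subtype.forall]
  refine forall₂_congr fun f hf => ?_
  let := absSeminormDist f hf
  rw [tendsto_iff_dist_tendsto_zero]
  change Tendsto (fun n => f |x n - 0|) _ _ ↔ _
  simp only [sub_zero]

end AbsWeakTopology

section DisjointNull

variable {E : Type*} [NormedAddCommGroup E] [Lattice E] [HasSolidNorm E] [IsOrderedAddMonoid E]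
  [NormedSpace ℝ E]

variable (E) in
/-- The right-hand side of the theorem, for positive sequences. -/
def DisjointNull : Prop :=
  ∀ z : ℕ → E, (∀ n, 0 ≤ z n) → Pairwise (fun i j => z i ⊓ z j = 0) → PosWeaklyNull z →
    Tendsto (fun n => ‖z n‖) atTop (𝓝 0)

theorem DisjointNull.exists_norm_lt_of_tendsto_norm_inf [CompleteSpace E] (hE : DisjointNull E)
    {h : ℕ → E} (hh0 : ∀ n, 0 ≤ h n) (hh : PosWeaklyNull h)
    (hinf : ∀ s, Tendsto (fun t => ‖h s ⊓ h t‖) atTop (𝓝 0)) {γ : ℝ} (hγ : 0 < γ) :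
    ∃ n, ‖h n‖ < γ := by
  by_contra! hγh
  obtain ⟨φ, hφ, hφinf⟩ := exists_strictMono_forall_lt_of_eventually fun k a =>
    (hinf a).eventually (ge_mem_nhds (by positivity : (0 : ℝ) < γ / 4 * (1 / 2) ^ k))
  obtain ⟨d, hd, hdisj, hdh⟩ := exists_disjoint_near (fun n => hh0 (φ n)) hφinf
  have hdnull := hE d (fun n => (hd n).1) hdisj
    ((hh.comp hφ.tendsto_atTop).of_le (fun n => (hd n).1) fun n => (hd n).2)
  obtain ⟨n, hn⟩ := (hdnull.eventually (gt_mem_nhds (half_pos hγ))).exists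
  linarith [hγh (φ n), hdh n, norm_sub_norm_le (h (φ n)) (d n)]

theorem DisjointNull.exists_inf_norm_ge [CompleteSpace E] (hE : DisjointNull E) {h : ℕ → E}
    (hh0 : ∀ n, 0 ≤ h n) (hh : PosWeaklyNull h) {γ : ℝ} (hγ : 0 < γ) (hγh : ∀ n, γ ≤ ‖h n‖) :
    ∃ s, ∃ η > 0, ∃ t : ℕ → ℕ, StrictMono t ∧ (∀ j, s < t j) ∧ ∀ j, η ≤ ‖h s ⊓ h (t j)‖ := by
  by_contra! H
  suffices hinf : ∀ s, Tendsto (fun t => ‖h s ⊓ h t‖) atTop (𝓝 0) by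
    obtain ⟨n, hn⟩ := hE.exists_norm_lt_of_tendsto_norm_inf hh0 hh hinf hγ
    exact (hγh n).not_gt hn
  intro s
  by_contra hs
  obtain ⟨η, hη, hfreq⟩ := exists_frequently_le_of_not_tendsto_zero (fun _ => norm_nonneg _) hs
  obtain ⟨t, ht, hts⟩ :=
    extraction_of_frequently_atTop (hfreq.and_eventually (eventually_gt_atTop s))
  obtain ⟨j, hj⟩ := H s η hη t ht fun j => (hts j).2
  exact (hts j).1.not_gt hj

end DisjointNull

section Overlap

variable {E : Type*} [Lattice E] [AddCommGroup E]

/-- For a positive sequence, `OverlapAtMost 1` is pairwise disjointness. -/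
def OverlapAtMost (m : ℕ) (e : ℕ → E) : Prop :=
  ∀ s : Finset ℕ, m < s.card → ∀ x, 0 ≤ x → (∀ i ∈ s, x ≤ e i) → x = 0

theorem OverlapAtMost.inf_comp {m : ℕ} {e : ℕ → E} (he : OverlapAtMost (m + 1) e) {s : ℕ}
    {t : ℕ → ℕ} (ht : Function.Injective t) (hts : ∀ j, t j ≠ s) :
    OverlapAtMost m fun j => e s ⊓ e (t j) := by
  classical
  intro S hS x hx hxS
  obtain ⟨j, hj⟩ := Finset.card_pos.1 (m.zero_le.trans_lt hS)
  have hs : s ∉ S.image t := fun hmem => by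
    obtain ⟨i, -, hi⟩ := Finset.mem_image.1 hmem
    exact hts i hi
  refine he (insert s (S.image t)) ?_ x hx ?_
  · rw [Finset.card_insert_of_notMem hs, Finset.card_image_of_injective S ht]
    omega
  · simp only [Finset.forall_mem_insert, Finset.forall_mem_image]
    exact ⟨(hxS j hj).trans inf_le_left, fun i hi => (hxS i hi).trans inf_le_right⟩

variable [IsOrderedAddMonoid E]

/-- An element below the terms indexed by `s` is disjoint from `∑ k ∈ s, (θ • a - b k)⁺`, which
dominates `a` once `#s * θ ≥ 2`. -/
theorem overlapAtMost_posPart_sub_smul [Module ℝ E] [PosSMulMono ℝ E] {a : E} {b : ℕ → E}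
    (hb : ∀ k, 0 ≤ b k) (hsum : ∀ s : Finset ℕ, ∑ k ∈ s, b k ≤ a) {θ : ℝ} {m : ℕ}
    (hm : 2 ≤ m * θ) : OverlapAtMost m fun k => (b k - θ • a)⁺ := by
  intro s hs x hx hxs
  have hθ : 0 ≤ θ := by
    by_contra! hθ
    nlinarith [(Nat.cast_nonneg m : (0 : ℝ) ≤ m)]
  have ha : 0 ≤ a := by simpa using hsum ∅
  obtain ⟨k, hk⟩ := Finset.card_pos.1 (m.zero_le.trans_lt hs)
  have hxa : x ≤ a := calc
    x ≤ (b k - θ • a)⁺ := hxs k hk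
    _ ≤ b k := posPart_sub_le (hb k) (smul_nonneg hθ ha)
    _ ≤ a := by simpa using hsum {k}
  have hdisj : ∀ k ∈ s, x ⊓ (θ • a - b k)⁺ = 0 := fun k hk =>
    le_antisymm ((inf_le_inf_right _ (hxs k hk)).trans_eq
      (by rw [← neg_sub, posPart_neg, posPart_inf_negPart_eq_zero])) (le_inf hx (posPart_nonneg _))
  have hcard : (2 : ℝ) ≤ s.card * θ :=
    hm.trans (mul_le_mul_of_nonneg_right (by exact_mod_cast hs.le) hθ)
  have hcover : a ≤ ∑ k ∈ s, (θ • a - b k)⁺ := calc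
    a ≤ (s.card * θ) • a - a := by
      rw [le_sub_iff_add_le, ← two_smul ℝ a]
      exact smul_le_smul_of_nonneg_right hcard ha
    _ ≤ (s.card * θ) • a - ∑ k ∈ s, b k := sub_le_sub_left (hsum s) _
    _ = ∑ k ∈ s, (θ • a - b k) := by
      rw [Finset.sum_sub_distrib, Finset.sum_const, ← Nat.cast_smul_eq_nsmul ℝ, smul_smul]
    _ ≤ ∑ k ∈ s, (θ • a - b k)⁺ := Finset.sum_le_sum fun k _ => le_posPart _
  refine le_antisymm ?_ hx
  calc x = x ⊓ a := (inf_eq_left.2 hxa).symm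
    _ ≤ x ⊓ ∑ k ∈ s, (θ • a - b k)⁺ := inf_le_inf_left x hcover
    _ = 0 := inf_sum_eq_zero hx (fun k _ => posPart_nonneg _) hdisj

end Overlap

theorem exists_strictMono_le_norm_sub_of_not_cauchySeq {E : Type*} [SeminormedAddCommGroup E]
    {u : ℕ → E} (h : ¬ CauchySeq u) :
    ∃ ε > 0, ∃ φ : ℕ → ℕ, StrictMono φ ∧ ∀ k, ε ≤ ‖u (φ (k + 1)) - u (φ k)‖ := by
  rw [Metric.cauchySeq_iff'] at h
  push Not at h
  obtain ⟨ε, hε, hN⟩ := h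
  choose g hgN hg using hN
  have hlt : ∀ N, N < g N := fun N => (hgN N).lt_of_ne fun hNg => by
    have := hg N
    rw [← hNg, dist_self] at this
    linarith
  refine ⟨ε, hε, fun k => g^[k] 0, strictMono_nat_of_lt_succ fun k => ?_, fun k => ?_⟩
  · rw [Function.iterate_succ_apply']
    exact hlt _
  · dsimp only
    rw [Function.iterate_succ_apply', ← dist_eq_norm]
    exact hg _

section OrderContinuity

variable {E : Type*} [NormedAddCommGroup E] [Lattice E] [HasSolidNorm E] [IsOrderedAddMonoid E]
  [NormedSpace ℝ E] [CompleteSpace E]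

theorem DisjointNull.exists_norm_lt_of_overlapAtMost (hE : DisjointNull E) (m : ℕ) {e : ℕ → E}
    (he0 : ∀ k, 0 ≤ e k) (he : PosWeaklyNull e) (hm : OverlapAtMost m e) {γ : ℝ} (hγ : 0 < γ) :
    ∃ k, ‖e k‖ < γ := by
  induction m generalizing e γ with
  | zero => exact ⟨0, by rw [hm {0} (by simp) (e 0) (he0 0) (by simp), norm_zero]; exact hγ⟩
  | succ m ih =>
    by_contra! hγe
    obtain ⟨s, η, hη, t, ht, hst, hηt⟩ := hE.exists_inf_norm_ge he0 he hγ hγe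
    obtain ⟨j, hj⟩ := ih (e := fun j => e s ⊓ e (t j)) (fun j => le_inf (he0 s) (he0 (t j)))
      ((he.comp ht.tendsto_atTop).of_le (fun j => le_inf (he0 s) (he0 (t j))) fun j => inf_le_right)
      (hm.inf_comp ht.injective fun j => (hst j).ne') hη
    exact (hηt j).not_gt hj

variable [PosSMulMono ℝ E]

/-- Along a monotone order bounded sequence that is not Cauchy, the increments over suitable
blocks have bounded sums, so cutting them down yields a sequence of bounded overlap. -/
theorem DisjointNull.cauchySeq_of_monotone (hE : DisjointNull E) {u : ℕ → E} (hu : Monotone u)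
    (hbdd : BddAbove (range u)) : CauchySeq u := by
  obtain ⟨B, hB⟩ := hbdd
  by_contra hu'
  obtain ⟨ε, hε, φ, hφ, hεφ⟩ := exists_strictMono_le_norm_sub_of_not_cauchySeq hu'
  set b : ℕ → E := fun k => u (φ (k + 1)) - u (φ k)
  set a : E := B - u (φ 0)
  have hb0 : ∀ k, 0 ≤ b k := fun k => sub_nonneg.2 (hu (hφ.monotone k.le_succ))
  have hsum : ∀ s : Finset ℕ, ∑ k ∈ s, b k ≤ a := fun s => by
    obtain ⟨N, hN⟩ := s.exists_nat_subset_range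
    calc ∑ k ∈ s, b k ≤ ∑ k ∈ Finset.range N, b k :=
          Finset.sum_le_sum_of_subset_of_nonneg hN fun k _ _ => hb0 k
      _ = u (φ N) - u (φ 0) := Finset.sum_range_sub (fun k => u (φ k)) N
      _ ≤ a := sub_le_sub_right (hB (mem_range_self _)) _
  have ha0 : 0 ≤ a := by simpa using hsum ∅
  have ha : ε ≤ ‖a‖ :=
    (hεφ 0).trans (norm_le_norm_of_nonneg_of_le (hb0 0)
      (by simpa only [Finset.sum_singleton] using hsum {0}))
  set θ := ε / (2 * ‖a‖)
  have hθ : 0 < θ := div_pos hε (by linarith)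
  have hθa : ‖θ • a‖ = ε / 2 := by
    rw [norm_smul, Real.norm_of_nonneg hθ.le]
    have : ‖a‖ ≠ 0 := (hε.trans_le ha).ne'
    simp only [θ]
    field_simp
  have he : ∀ k, ε / 2 ≤ ‖(b k - θ • a)⁺‖ := fun k => by
    linarith [hεφ k, norm_sub_posPart_sub_le (hb0 k) (smul_nonneg hθ.le ha0),
      norm_sub_norm_le (b k) (b k - θ • a)⁺]
  obtain ⟨k, hk⟩ := hE.exists_norm_lt_of_overlapAtMost ⌈2 / θ⌉₊ (fun k => posPart_nonneg _)
    ((posWeaklyNull_of_sum_le hb0 fun N => hsum _).of_le (fun k => posPart_nonneg _)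
      fun k => posPart_sub_le (hb0 k) (smul_nonneg hθ.le ha0))
    (overlapAtMost_posPart_sub_smul hb0 hsum ((div_le_iff₀ hθ).1 (Nat.le_ceil _))) (half_pos hε)
  exact (he k).not_gt hk

theorem DisjointNull.exists_tendsto_of_monotone (hE : DisjointNull E) {u : ℕ → E}
    (hu : Monotone u) (hbdd : BddAbove (range u)) : ∃ L, Tendsto u atTop (𝓝 L) :=
  cauchySeq_tendsto_of_complete (hE.cauchySeq_of_monotone hu hbdd)

theorem DisjointNull.exists_tendsto_of_antitone (hE : DisjointNull E) {u : ℕ → E}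
    (hu : Antitone u) (hbdd : BddBelow (range u)) : ∃ L, Tendsto u atTop (𝓝 L) := by
  obtain ⟨B, hB⟩ := hbdd
  obtain ⟨L, hL⟩ := hE.exists_tendsto_of_monotone (u := fun n => -u n)
    (fun _ _ hmn => neg_le_neg (hu hmn))
    ⟨-B, forall_mem_range.2 fun n => neg_le_neg (hB (mem_range_self n))⟩
  exact ⟨-L, by simpa using hL.neg⟩

theorem DisjointNull.exists_isLUB (hE : DisjointNull E) {G : ℕ → E} (hG : BddAbove (range G)) :
    ∃ w, IsLUB (range G) w ∧ Tendsto (partialSups G) atTop (𝓝 w) := by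
  obtain ⟨w, hw⟩ :=
    hE.exists_tendsto_of_monotone (partialSups_monotone G) (bddAbove_range_partialSups.2 hG)
  have := isLUB_of_tendsto_atTop (partialSups_monotone G) hw
  rw [IsLUB, upperBounds_range_partialSups] at this
  exact ⟨w, this, hw⟩

end OrderContinuity

section OrderInterval

variable {E : Type*} [NormedAddCommGroup E] [Lattice E] [HasSolidNorm E] [IsOrderedAddMonoid E]
  [NormedSpace ℝ E] [CompleteSpace E] [PosSMulMono ℝ E]

/-- With `w j = sup_{k ≥ j} G k` and `v = inf_j w j`, the bounds on `Φ i (G k)` force `Φ i v = 0`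
for all `i`, while `G k - v ≤ w k - v` is small in norm. -/
theorem DisjointNull.tendsto_apply_self_of_forall_lt (hE : DisjointNull E) {G : ℕ → E} {u : E}
    (hG0 : ∀ k, 0 ≤ G k) (hGu : ∀ k, G k ≤ u) {Φ : ℕ → E →L[ℝ] ℝ}
    (hΦ0 : ∀ k v, 0 ≤ v → 0 ≤ Φ k v) (hΦ1 : ∀ k, ‖Φ k‖ ≤ 1)
    (hΦG : ∀ i k, i < k → Φ i (G k) ≤ (1 / 2) ^ k) :
    Tendsto (fun k => Φ k (G k)) atTop (𝓝 0) := by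
  choose w hwG hwlim using fun j =>
    hE.exists_isLUB (G := fun t => G (j + t)) ⟨u, forall_mem_range.2 fun t => hGu _⟩
  have hGw : ∀ j t, G (j + t) ≤ w j := fun j t => (hwG j).1 (mem_range_self t)
  have hw0 : ∀ j, 0 ≤ w j := fun j => (hG0 j).trans (hGw j 0)
  have hw : Antitone w := antitone_nat_of_succ_le fun j =>
    (hwG (j + 1)).2 (forall_mem_range.2 fun t => by
      simpa [add_assoc, add_comm 1 t] using hGw j (t + 1))
  have hΦw : ∀ i j, i < j → Φ i (w j) ≤ 2 * (1 / 2) ^ j := fun i j hij =>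
    (Φ i).apply_le_of_tendsto_partialSups (hΦ0 i) (fun t => hG0 _) (hwlim j) fun N => calc
      ∑ t ∈ Finset.range N, Φ i (G (j + t))
          ≤ ∑ t ∈ Finset.range N, (1 / 2 : ℝ) ^ j * (1 / 2) ^ t :=
        Finset.sum_le_sum fun t _ => (hΦG i (j + t) (by omega)).trans_eq (pow_add _ _ _)
      _ ≤ 2 * (1 / 2) ^ j := by
        rw [← Finset.mul_sum, mul_comm]
        gcongr
        exact sum_geometric_two_le _
  obtain ⟨v, hv⟩ := hE.exists_tendsto_of_antitone hw ⟨0, forall_mem_range.2 hw0⟩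
  have hvw : ∀ j, v ≤ w j := hw.le_of_tendsto hv
  have hgeom : Tendsto (fun j : ℕ => 2 * (1 / 2 : ℝ) ^ j) atTop (𝓝 0) := by
    simpa using (tendsto_pow_atTop_nhds_zero_of_lt_one (r := (1 / 2 : ℝ)) (by norm_num)
      (by norm_num)).const_mul 2
  have hΦv : ∀ i, Φ i v = 0 := fun i => by
    refine le_antisymm (ge_of_tendsto hgeom ?_) (hΦ0 i v (ge_of_tendsto' hv hw0))
    filter_upwards [eventually_gt_atTop i] with j hj
    exact ((Φ i).monotone_of_nonneg (hΦ0 i) (hvw j)).trans (hΦw i j hj)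
  refine squeeze_zero (fun k => hΦ0 k _ (hG0 k)) (fun k => ?_)
    (tendsto_iff_norm_sub_tendsto_zero.1 hv)
  have hGv : (G k - v)⁺ ≤ w k - v := sup_le (sub_le_sub_right (hGw k 0) v) (sub_nonneg.2 (hvw k))
  calc Φ k (G k) = Φ k (G k ⊓ v) + Φ k (G k - v)⁺ := by
        rw [← map_add, inf_eq_sub_posPart_sub, sub_add_cancel]
    _ ≤ Φ k v + ‖(G k - v)⁺‖ := add_le_add ((Φ k).monotone_of_nonneg (hΦ0 k) inf_le_right)
        ((Real.le_norm_self _).trans (by simpa using (Φ k).le_of_opNorm_le (hΦ1 k) _))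
    _ ≤ ‖w k - v‖ := by
        rw [hΦv, zero_add]
        exact norm_le_norm_of_nonneg_of_le (posPart_nonneg _) hGv

theorem DisjointNull.tendsto_norm_of_le (hE : DisjointNull E) {g : ℕ → E} {u : E}
    (hg0 : ∀ n, 0 ≤ g n) (hgu : ∀ n, g n ≤ u) (hg : PosWeaklyNull g) :
    Tendsto (fun n => ‖g n‖) atTop (𝓝 0) := by
  by_contra hnot
  obtain ⟨δ, hδ, hfreq⟩ := exists_frequently_le_of_not_tendsto_zero (fun n => norm_nonneg _) hnot
  obtain ⟨φ, hφ, hφδ⟩ := extraction_of_frequently_atTop hfreq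
  choose Φ hΦ0 hΦg hΦ1 using fun n => exists_positive_norming_functional (hg0 n)
  obtain ⟨ψ, -, hψ⟩ := exists_strictMono_forall_lt_of_eventually fun k a =>
    ((hg (Φ (φ a)) (hΦ0 _)).comp hφ.tendsto_atTop).eventually
      (ge_mem_nhds (by positivity : (0 : ℝ) < (1 / 2) ^ k))
  obtain ⟨k, hk⟩ := ((hE.tendsto_apply_self_of_forall_lt (fun k => hg0 (φ (ψ k)))
    (fun k => hgu _) (fun k => hΦ0 _) (fun k => hΦ1 _) hψ).eventually (gt_mem_nhds hδ)).exists
  exact ((hφδ (ψ k)).trans (hΦg _)).not_gt hk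

end OrderInterval

/-- A Banach lattice has the positive Schur property iff every pairwise disjoint absolutely
weakly null sequence is norm null. -/
theorem positiveSchur_iff_disjoint_absWeakNull_normNull {E : Type*} [NormedAddCommGroup E] [Lattice E] [HasSolidNorm E] [IsOrderedAddMonoid E] [NormedSpace ℝ E] [PosSMulStrictMono ℝ E] [CompleteSpace E] :
    (∀ x : ℕ → E, (∀ n, 0 ≤ x n) →
        (∀ f : E →L[ℝ] ℝ, Tendsto (fun n => f (x n)) atTop (𝓝 0)) →
        Tendsto (fun n => ‖x n‖) atTop (𝓝 0)) ↔
      (∀ x : ℕ → E, (∀ m n, m ≠ n → |x m| ⊓ |x n| = 0) →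
        Tendsto x atTop (@nhds E (absWeakTopology E) 0) →
        Tendsto (fun n => ‖x n‖) atTop (𝓝 0)) := by
  constructor
  · intro hPS x _ hx
    simpa only [norm_abs_eq_norm] using hPS (fun n => |x n|) (fun n => abs_nonneg _)
      (tendsto_absWeakTopology_zero_iff.1 hx).tendsto_apply
  · intro hD x hx0 hx
    have hE : DisjointNull E := fun z hz0 hzd hz => hD z
      (fun m n hmn => by simpa only [abs_of_nonneg (hz0 _)] using hzd hmn)
      (tendsto_absWeakTopology_zero_iff.2 (by simpa only [abs_of_nonneg (hz0 _)] using hz))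
    by_contra hnot
    obtain ⟨δ, hδ, hfreq⟩ := exists_frequently_le_of_not_tendsto_zero (fun n => norm_nonneg _) hnot
    obtain ⟨φ, hφ, hφδ⟩ := extraction_of_frequently_atTop hfreq
    have hxφ : PosWeaklyNull fun n => x (φ n) := fun f _ => (hx f).comp hφ.tendsto_atTop
    obtain ⟨s, η, hη, t, ht, -, hηt⟩ := hE.exists_inf_norm_ge (fun n => hx0 _) hxφ hδ hφδ
    have hnull := hE.tendsto_norm_of_le (g := fun j => x (φ s) ⊓ x (φ (t j)))
      (fun j => le_inf (hx0 _) (hx0 _)) (fun j => inf_le_left)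
      ((hxφ.comp ht.tendsto_atTop).of_le (fun j => le_inf (hx0 _) (hx0 _)) fun j => inf_le_right)
    obtain ⟨j, hj⟩ := (hnull.eventually (gt_mem_nhds hη)).exists
    exact (hηt j).not_gt hj
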